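/- arXiv:2001.06694 — 3 statements merged into one kernel-verified Lean document; each statement's English description precedes it below -/
import Mathlib

section
/- Let F : C ⇄ D : G be an adjunction between model categories. Then G is a right Quillen functor if and only if G preserves fibrations between fibrant objects and preserves all acyclic fibrations. -/
open CategoryTheory CategoryTheory.Limits

universe v u

/-- A class of morphisms is closed under retracts if whenever `f` is a retract of
`g` (in the arrow category) and `g` lies in the class, so does `f`. -/
def RetractClosed {C : Type u} [Category.{v} C] (P : MorphismProperty C) : Prop :=
  ∀ {X Y X' Y' : C} (f : X ⟶ Y) (g : X' ⟶ Y')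
    (iX : X ⟶ X') (rX : X' ⟶ X) (iY : Y ⟶ Y') (rY : Y' ⟶ Y),
    iX ≫ rX = 𝟙 X → iY ≫ rY = 𝟙 Y → iX ≫ g = f ≫ iY → g ≫ rY = rX ≫ f →
    P g → P f

/-- A (Quillen) model structure on a category `C`: classes of weak equivalences,
cofibrations and fibrations satisfying the two-out-of-three, retract, lifting and
factorization axioms. -/
structure ModelStruct (C : Type u) [Category.{v} C] where
  W : MorphismProperty C
  Cof : MorphismProperty C
  Fib : MorphismProperty C
  w_id : ∀ X : C, W (𝟙 X)
  cof_id : ∀ X : C, Cof (𝟙 X)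
  fib_id : ∀ X : C, Fib (𝟙 X)
  w_comp : ∀ {X Y Z : C} (f : X ⟶ Y) (g : Y ⟶ Z), W f → W g → W (f ≫ g)
  w_cancel_left : ∀ {X Y Z : C} (f : X ⟶ Y) (g : Y ⟶ Z), W f → W (f ≫ g) → W g
  w_cancel_right : ∀ {X Y Z : C} (f : X ⟶ Y) (g : Y ⟶ Z), W g → W (f ≫ g) → W f
  w_retract : RetractClosed W
  cof_retract : RetractClosed Cof
  fib_retract : RetractClosed Fib
  lift_cof_trivFib : ∀ {A B X Y : C} (i : A ⟶ B) (p : X ⟶ Y),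
    Cof i → Fib p → W p → HasLiftingProperty i p
  lift_trivCof_fib : ∀ {A B X Y : C} (i : A ⟶ B) (p : X ⟶ Y),
    Cof i → W i → Fib p → HasLiftingProperty i p
  fact₁ : ∀ {X Y : C} (f : X ⟶ Y), ∃ (Z : C) (i : X ⟶ Z) (p : Z ⟶ Y),
    Cof i ∧ W p ∧ Fib p ∧ i ≫ p = f
  fact₂ : ∀ {X Y : C} (f : X ⟶ Y), ∃ (Z : C) (i : X ⟶ Z) (p : Z ⟶ Y),
    Cof i ∧ W i ∧ Fib p ∧ i ≫ p = f

namespace ModelStruct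

variable {C : Type u} [Category.{v} C] (M : ModelStruct C)

/-- An object is fibrant if the map to the terminal object is a fibration. -/
def Fibrant [HasTerminal C] (X : C) : Prop := M.Fib (terminal.from X)

/-- An object is cofibrant if the map from the initial object is a cofibration. -/
def Cofibrant [HasInitial C] (X : C) : Prop := M.Cof (initial.to X)

end ModelStruct

/-!
Since `F ⊣ G`, the map `i` lifts against `G p` exactly when `F i` lifts against `p`, so it
suffices to show that `F` preserves cofibrations and acyclic cofibrations. Cofibrations are
the maps lifting against acyclic fibrations, which `G` preserves. For an acyclic cofibration
`i`, the map `F i` lifts against all fibrations between fibrant objects, and any such map is a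
weak equivalence: after composing with a fibrant replacement of its target, factor it as an
acyclic cofibration followed by a fibration between fibrant objects; the lift exhibits it as a
retract of the acyclic cofibration.
-/

namespace ModelStruct

section

variable {C : Type u} [Category.{v} C] (M : ModelStruct C)

lemma fib_of_hasLiftingProperty {X Y : C} (p : X ⟶ Y)
    (h : ∀ {A B : C} (i : A ⟶ B), M.Cof i → M.W i → HasLiftingProperty i p) :
    M.Fib p := by
  obtain ⟨Z, a, b, ha, haw, hb, hab⟩ := M.fact₂ p
  have := h a ha haw
  have sq : CommSq (𝟙 X) a p b := ⟨by simp [hab]⟩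
  exact M.fib_retract p b a sq.lift (𝟙 Y) (𝟙 Y)
    sq.fac_left (by simp) (by simp [hab]) (by simp [sq.fac_right]) hb

lemma cof_of_hasLiftingProperty {A B : C} (i : A ⟶ B)
    (h : ∀ {X Y : C} (p : X ⟶ Y), M.Fib p → M.W p → HasLiftingProperty i p) :
    M.Cof i := by
  obtain ⟨Z, a, b, ha, hbw, hb, hab⟩ := M.fact₁ i
  have := h b hb hbw
  have sq : CommSq a i b (𝟙 B) := ⟨by simp [hab]⟩
  exact M.cof_retract i a (𝟙 A) (𝟙 A) sq.lift b
    (by simp) sq.fac_right (by simp [sq.fac_left]) (by simp [hab]) ha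

lemma fib_comp {X Y Z : C} (f : X ⟶ Y) (g : Y ⟶ Z) (hf : M.Fib f) (hg : M.Fib g) :
    M.Fib (f ≫ g) := by
  refine M.fib_of_hasLiftingProperty _ fun i hi hiw => ?_
  have := M.lift_trivCof_fib i f hi hiw hf
  have := M.lift_trivCof_fib i g hi hiw hg
  infer_instance

variable [HasTerminal C]

lemma fibrant_of_fib {X Y : C} (p : X ⟶ Y) (hp : M.Fib p) (hY : M.Fibrant Y) :
    M.Fibrant X := by
  rw [Fibrant, Subsingleton.elim (terminal.from X) (p ≫ terminal.from Y)]
  exact M.fib_comp p _ hp hY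

lemma exists_trivCof_to_fibrant (X : C) :
    ∃ (R : C) (r : X ⟶ R), M.Cof r ∧ M.W r ∧ M.Fibrant R := by
  obtain ⟨R, r, t, hr, hrw, ht, -⟩ := M.fact₂ (terminal.from X)
  exact ⟨R, r, hr, hrw, by rwa [Fibrant, Subsingleton.elim (terminal.from R) t]⟩

lemma w_of_hasLiftingProperty_of_fibrant {A B : C} (f : A ⟶ B) (hB : M.Fibrant B)
    (h : ∀ {X Y : C} (q : X ⟶ Y), M.Fibrant X → M.Fibrant Y → M.Fib q →
      HasLiftingProperty f q) :
    M.W f := by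
  obtain ⟨Z, j, q, -, hjw, hq, hjq⟩ := M.fact₂ f
  have := h q (M.fibrant_of_fib q hq hB) hB hq
  have sq : CommSq j f q (𝟙 B) := ⟨by simp [hjq]⟩
  exact M.w_retract f j (𝟙 A) (𝟙 A) sq.lift q
    (by simp) sq.fac_right (by simp [sq.fac_left]) (by simp [hjq]) hjw

lemma w_of_hasLiftingProperty {A B : C} (f : A ⟶ B)
    (h : ∀ {X Y : C} (q : X ⟶ Y), M.Fibrant X → M.Fibrant Y → M.Fib q →
      HasLiftingProperty f q) :
    M.W f := by
  obtain ⟨R, r, hr, hrw, hR⟩ := M.exists_trivCof_to_fibrant B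
  have hfr : M.W (f ≫ r) := M.w_of_hasLiftingProperty_of_fibrant _ hR fun q hX hY hq =>
    have := h q hX hY hq
    have := M.lift_trivCof_fib r q hr hrw hq
    inferInstance
  exact M.w_cancel_right f r hrw hfr

end

variable {C : Type u} [Category.{v} C] {D : Type u} [Category.{v} D]
  (MC : ModelStruct C) (MD : ModelStruct D) {F : C ⥤ D} {G : D ⥤ C}

lemma cof_map_of_preserves_trivFib (adj : F ⊣ G)
    (hG : ∀ {X Y : D} (p : X ⟶ Y), MD.Fib p → MD.W p → MC.Fib (G.map p) ∧ MC.W (G.map p))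
    {A B : C} (i : A ⟶ B) (hi : MC.Cof i) :
    MD.Cof (F.map i) := by
  refine MD.cof_of_hasLiftingProperty _ fun p hp hpw => ?_
  rw [adj.hasLiftingProperty_iff]
  exact MC.lift_cof_trivFib i (G.map p) hi (hG p hp hpw).1 (hG p hp hpw).2

lemma w_map_of_preserves_fib_of_fibrant [HasTerminal D] (adj : F ⊣ G)
    (hG : ∀ {X Y : D} (p : X ⟶ Y), MD.Fibrant X → MD.Fibrant Y → MD.Fib p →
      MC.Fib (G.map p))
    {A B : C} (i : A ⟶ B) (hi : MC.Cof i) (hiw : MC.W i) :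
    MD.W (F.map i) := by
  refine MD.w_of_hasLiftingProperty _ fun q hX hY hq => ?_
  rw [adj.hasLiftingProperty_iff]
  exact MC.lift_trivCof_fib i (G.map q) hi hiw (hG q hX hY hq)

lemma fib_map_of_preserves_trivCof (adj : F ⊣ G)
    (hF : ∀ {A B : C} (i : A ⟶ B), MC.Cof i → MC.W i → MD.Cof (F.map i) ∧ MD.W (F.map i))
    {X Y : D} (p : X ⟶ Y) (hp : MD.Fib p) :
    MC.Fib (G.map p) := by
  refine MC.fib_of_hasLiftingProperty _ fun i hi hiw => ?_
  rw [← adj.hasLiftingProperty_iff]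
  exact MD.lift_trivCof_fib (F.map i) p (hF i hi hiw).1 (hF i hi hiw).2 hp

end ModelStruct

theorem dugger_right_quillen_criterion_general
    {C : Type u} [Category.{v} C] {D : Type u} [Category.{v} D]
    [HasTerminal D]
    (MC : ModelStruct C) (MD : ModelStruct D)
    (F : C ⥤ D) (G : D ⥤ C) (adj : F ⊣ G) :
    ((∀ {X Y : D} (p : X ⟶ Y), MD.Fib p → MC.Fib (G.map p)) ∧
      (∀ {X Y : D} (p : X ⟶ Y), MD.Fib p → MD.W p → MC.Fib (G.map p) ∧ MC.W (G.map p)))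
    ↔
    ((∀ {X Y : D} (p : X ⟶ Y), MD.Fibrant X → MD.Fibrant Y → MD.Fib p →
        MC.Fib (G.map p)) ∧
      (∀ {X Y : D} (p : X ⟶ Y), MD.Fib p → MD.W p → MC.Fib (G.map p) ∧ MC.W (G.map p))) := by
  refine ⟨fun ⟨hFib, hTrivFib⟩ => ⟨fun p _ _ hp => hFib p hp, hTrivFib⟩,
    fun ⟨hFibFibrant, hTrivFib⟩ => ⟨?_, hTrivFib⟩⟩
  have hF : ∀ {A B : C} (i : A ⟶ B), MC.Cof i → MC.W i →
      MD.Cof (F.map i) ∧ MD.W (F.map i) := fun i hi hiw =>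
    ⟨ModelStruct.cof_map_of_preserves_trivFib MC MD adj hTrivFib i hi,
      ModelStruct.w_map_of_preserves_fib_of_fibrant MC MD adj hFibFibrant i hi hiw⟩
  exact fun {_ _} p hp => ModelStruct.fib_map_of_preserves_trivCof MC MD adj hF p hp

/-- **Dugger's criterion for right Quillen functors.**
Let `F ⊣ G` be an adjunction between model categories `C` and `D`.  Then `G` is a
right Quillen functor (preserves fibrations and acyclic fibrations) if and only if
`G` preserves fibrations between fibrant objects and preserves all acyclic
fibrations. -/
theorem dugger_right_quillen_criterion
    {C : Type u} [Category.{v} C] {D : Type u} [Category.{v} D]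
    [HasTerminal C] [HasTerminal D] [HasInitial C] [HasInitial D]
    (MC : ModelStruct C) (MD : ModelStruct D)
    (F : C ⥤ D) (G : D ⥤ C) (adj : F ⊣ G) :
    ((∀ {X Y : D} (p : X ⟶ Y), MD.Fib p → MC.Fib (G.map p)) ∧
      (∀ {X Y : D} (p : X ⟶ Y), MD.Fib p → MD.W p → MC.Fib (G.map p) ∧ MC.W (G.map p)))
    ↔
    ((∀ {X Y : D} (p : X ⟶ Y), MD.Fibrant X → MD.Fibrant Y → MD.Fib p →
        MC.Fib (G.map p)) ∧
      (∀ {X Y : D} (p : X ⟶ Y), MD.Fib p → MD.W p → MC.Fib (G.map p) ∧ MC.W (G.map p))) :=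
  dugger_right_quillen_criterion_general MC MD F G adj
end

section
/- Let C be a symmetric monoidal category with coequalizers, S a commutative monoid in C, and F : C → D a strong symmetric monoidal functor preserving coequalizers. Then for S-modules M, N there is a natural isomorphism F(M ⊗_S N) ≅ F(M) ⊗_{F(S)} F(N), where F(S) is the commutative monoid in D induced by the strong monoidal structure. -/
open CategoryTheory CategoryTheory.Limits MonoidalCategory
open CategoryTheory.Functor.LaxMonoidal

universe v₁ v₂ u₁ u₂

variable {C : Type u₁} [Category.{v₁} C] [MonoidalCategory C] [SymmetricCategory C]
  [HasCoequalizers C]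

/-- The right action of a commutative monoid `S` on a left `S`-module, obtained
from the left action via the braiding. -/
noncomputable def rightAct {S : Mon C} (M : Mod C S.X) : M.X ⊗ S.X ⟶ M.X :=
  (β_ M.X S.X).hom ≫ (ModObj.smul (M := S.X) (X := M.X) : S.X ⊗ M.X ⟶ M.X)

/-- The first of the two parallel maps `M ⊗ S ⊗ N ⇉ M ⊗ N` (acting on `M`). -/
noncomputable def relTensorLeft {S : Mon C} (M N : Mod C S.X) :
    (M.X ⊗ S.X) ⊗ N.X ⟶ M.X ⊗ N.X :=
  rightAct M ▷ N.X

/-- The second of the two parallel maps `M ⊗ S ⊗ N ⇉ M ⊗ N` (acting on `N`). -/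
noncomputable def relTensorRight {S : Mon C} (M N : Mod C S.X) :
    (M.X ⊗ S.X) ⊗ N.X ⟶ M.X ⊗ N.X :=
  (α_ M.X S.X N.X).hom ≫ (M.X ◁ (ModObj.smul (M := S.X) (X := N.X) : S.X ⊗ N.X ⟶ N.X))

/-- The relative tensor product `M ⊗_S N` of modules over a commutative monoid
`S`, defined as the coequalizer of the two actions `M ⊗ S ⊗ N ⇉ M ⊗ N`. -/
noncomputable def relTensor {S : Mon C} (M N : Mod C S.X) : C :=
  coequalizer (relTensorLeft M N) (relTensorRight M N)

variable {D : Type u₂} [Category.{v₂} D] [MonoidalCategory D] [HasCoequalizers D]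

/-!
The tensorators of `F` identify the image of the pair `M ⊗ S ⊗ N ⇉ M ⊗ N` with the pair built
from the induced `F S`-actions on `F M` and `F N`, so the coequalizer that `F` preserves is the
one defining `F M ⊗_{F S} F N`.
-/

namespace CategoryTheory.Functor

variable {C' D' : Type*} [Category C'] [Category D'] [MonoidalCategory C'] [MonoidalCategory D']
  (F : C' ⥤ D')

section LaxMonoidal

variable [F.LaxMonoidal] {X Y Z W : C'}

lemma whiskerRight_μ_comp_map_comp_μ (a : X ⊗ Y ⟶ Z) (W : C') :
    ((μ F X Y ≫ F.map a) ▷ F.obj W) ≫ μ F Z W =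
      (μ F X Y ▷ F.obj W ≫ μ F (X ⊗ Y) W) ≫ F.map (a ▷ W) := by
  rw [comp_whiskerRight, Category.assoc, μ_natural_left, Category.assoc]

lemma associator_whiskerLeft_μ_comp_map_comp_μ (X : C') (b : Y ⊗ W ⟶ Z) :
    ((α_ (F.obj X) (F.obj Y) (F.obj W)).hom ≫ F.obj X ◁ (μ F Y W ≫ F.map b)) ≫ μ F X Z =
      (μ F X Y ▷ F.obj W ≫ μ F (X ⊗ Y) W) ≫ F.map ((α_ X Y W).hom ≫ X ◁ b) := by
  simp only [MonoidalCategory.whiskerLeft_comp, Category.assoc, μ_natural_right, F.map_comp,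
    associativity_assoc]

end LaxMonoidal

section Monoidal

variable [F.Monoidal] {X Y W : C'}

noncomputable def parallelPairBalancedIso (a : X ⊗ Y ⟶ X) (b : Y ⊗ W ⟶ W) :
    parallelPair ((μ F X Y ≫ F.map a) ▷ F.obj W)
        ((α_ (F.obj X) (F.obj Y) (F.obj W)).hom ≫ F.obj X ◁ (μ F Y W ≫ F.map b)) ≅
      parallelPair (F.map (a ▷ W)) (F.map ((α_ X Y W).hom ≫ X ◁ b)) :=
  parallelPair.ext (whiskerRightIso (Monoidal.μIso F X Y) (F.obj W) ≪≫ Monoidal.μIso F (X ⊗ Y) W)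
    (Monoidal.μIso F X W) (F.whiskerRight_μ_comp_map_comp_μ a W)
    (F.associator_whiskerLeft_μ_comp_map_comp_μ X b)

noncomputable def mapCoequalizerBalancedIso [HasCoequalizers C'] [HasCoequalizers D']
    [PreservesColimitsOfShape WalkingParallelPair F] (a : X ⊗ Y ⟶ X) (b : Y ⊗ W ⟶ W) :
    F.obj (coequalizer (a ▷ W) ((α_ X Y W).hom ≫ X ◁ b)) ≅
      coequalizer ((μ F X Y ≫ F.map a) ▷ F.obj W)
        ((α_ (F.obj X) (F.obj Y) (F.obj W)).hom ≫ F.obj X ◁ (μ F Y W ≫ F.map b)) :=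
  (PreservesCoequalizer.iso F _ _).symm ≪≫
    HasColimit.isoOfNatIso (F.parallelPairBalancedIso a b).symm

end Monoidal

end CategoryTheory.Functor

theorem monoidal_functor_preserves_relative_tensor_general
    (F : C ⥤ D) [F.Monoidal]
    [PreservesColimitsOfShape WalkingParallelPair F]
    (S : Mon C)
    (M N : Mod C S.X) :
    Nonempty
      (F.obj (relTensor M N) ≅
        coequalizer
          (((μ F M.X S.X ≫ F.map (rightAct M)) ▷ F.obj N.X :
              (F.obj M.X ⊗ F.obj S.X) ⊗ F.obj N.X ⟶ F.obj M.X ⊗ F.obj N.X))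
          ((α_ (F.obj M.X) (F.obj S.X) (F.obj N.X)).hom ≫
            (F.obj M.X ◁ (μ F S.X N.X ≫ F.map (ModObj.smul (M := S.X) (X := N.X) : S.X ⊗ N.X ⟶ N.X))))) :=
  ⟨F.mapCoequalizerBalancedIso (rightAct M) (ModObj.smul (M := S.X) (X := N.X))⟩

/-- **Strong symmetric monoidal functors preserve relative tensor products.**
Let `C` be a symmetric monoidal category with coequalizers, `S` a commutative
monoid in `C`, and `F : C ⥤ D` a strong monoidal functor preserving coequalizers.
For `S`-modules `M, N` there is an isomorphism
`F(M ⊗_S N) ≅ F(M) ⊗_{F(S)} F(N)`, where the right-hand side is the coequalizer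
in `D` of the two `F(S)`-actions on `F(M) ⊗ F(N)` induced by the strong monoidal
structure of `F`. -/
theorem monoidal_functor_preserves_relative_tensor
    (F : C ⥤ D) [F.Monoidal]
    [PreservesColimitsOfShape WalkingParallelPair F]
    (S : Mon C) (hcomm : (β_ S.X S.X).hom ≫ MonObj.mul (X := S.X) = MonObj.mul (X := S.X))
    (M N : Mod C S.X) :
    Nonempty
      (F.obj (relTensor M N) ≅
        coequalizer
          (((μ F M.X S.X ≫ F.map (rightAct M)) ▷ F.obj N.X :
              (F.obj M.X ⊗ F.obj S.X) ⊗ F.obj N.X ⟶ F.obj M.X ⊗ F.obj N.X))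
          ((α_ (F.obj M.X) (F.obj S.X) (F.obj N.X)).hom ≫
            (F.obj M.X ◁ (μ F S.X N.X ≫ F.map (ModObj.smul (M := S.X) (X := N.X) : S.X ⊗ N.X ⟶ N.X))))) :=
  monoidal_functor_preserves_relative_tensor_general F S M N
end

section
/- Let C be a model category in which weak equivalences are closed under filtered colimits of cofibrations, and let λ be an ordinal. Given two λ-sequences X : λ → C and Y : λ → C of cofibrations between cofibrant objects, and a natural transformation φ : X → Y which is a levelwise weak equivalence, the induced map on colimits colim X → colim Y is a weak equivalence. -/
/-!
Since `J` is well-ordered, it is filtered, so by the hypothesis on filtered colimits it suffices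
that every map `X i ⟶ X j` of a `λ`-sequence of cofibrations is a cofibration. By the retract
argument the cofibrations are exactly the maps with the left lifting property against trivial
fibrations, and such maps are stable under transfinite composition.
-/

open CategoryTheory CategoryTheory.Limits

universe v u

section TransfiniteSequences

variable {C : Type u} [Category.{v} C]

/-- The cocone over the restriction of a sequence `X : J ⥤ C` to the objects
below `j`, with apex `X.obj j`.  A `λ`-sequence is required to be a colimit
cocone at every limit point `j`. -/
@[simps]
def seqCocone {J : Type v} [Preorder J] (X : J ⥤ C) (j : J) :
    Cocone ((Monotone.functor (f := (Subtype.val : Set.Iio j → J))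
      (fun _ _ h => h)) ⋙ X) where
  pt := X.obj j
  ι :=
    { app := fun x => X.map (homOfLE x.2.le)
      naturality := fun x y φ => by
        dsimp
        rw [Category.comp_id, ← X.map_comp]
        exact congrArg X.map (Subsingleton.elim _ _) }

universe w

theorem RetractClosed.isStableUnderRetracts {P : MorphismProperty C} (hP : RetractClosed P) :
    P.IsStableUnderRetracts where
  of_retract h hg := hP _ _ _ _ _ _ h.retract_left h.retract_right h.i_w h.r_w.symm hg

-- `seqCocone X j` is, up to unfolding, Mathlib's `(Set.principalSegIio j).cocone X`.
theorem CategoryTheory.Functor.isWellOrderContinuous_of_isColimit_seqCocone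
    {J : Type v} [LinearOrder J] (X : J ⥤ C)
    (hX : ∀ j : J, Order.IsSuccLimit j → Nonempty (IsColimit (seqCocone X j))) :
    X.IsWellOrderContinuous :=
  ⟨hX⟩

noncomputable def CategoryTheory.MorphismProperty.transfiniteCompositionOfShapeColimitι
    {J : Type w} [LinearOrder J] [OrderBot J] [SuccOrder J] [WellFoundedLT J]
    (W : MorphismProperty C) (X : J ⥤ C) [X.IsWellOrderContinuous] [HasColimit X]
    (hsucc : ∀ j : J, W (X.map (homOfLE (Order.le_succ j)))) :
    W.TransfiniteCompositionOfShape J (colimit.ι X ⊥) where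
  F := X
  isoBot := Iso.refl _
  incl := (colimit.cocone X).ι
  isColimit := colimit.isColimit X
  map_mem j _ := hsucc j

theorem CategoryTheory.MorphismProperty.map_mem_of_succ_mem
    {J : Type w} [LinearOrder J] [OrderBot J] [SuccOrder J] [WellFoundedLT J]
    (W : MorphismProperty C) [W.IsStableUnderTransfiniteComposition.{w}]
    (X : J ⥤ C) [X.IsWellOrderContinuous] [HasColimit X]
    (hsucc : ∀ j : J, W (X.map (homOfLE (Order.le_succ j)))) {i j : J} (f : i ⟶ j) :
    W (X.map f) :=
  (W.transfiniteCompositionOfShapeColimitι X hsucc).mem_map f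

namespace ModelStruct

variable (M : ModelStruct C)

theorem hasFactorization_cof_trivFib :
    MorphismProperty.HasFactorization M.Cof (M.Fib ⊓ M.W) where
  nonempty_mapFactorizationData f := by
    obtain ⟨Z, i, p, hi, hw, hp, hfac⟩ := M.fact₁ f
    exact ⟨{ Z := Z, i := i, p := p, fac := hfac, hi := hi, hp := ⟨hp, hw⟩ }⟩

theorem llp_trivFib_eq_cof : (M.Fib ⊓ M.W).llp = M.Cof :=
  have := M.hasFactorization_cof_trivFib
  have := RetractClosed.isStableUnderRetracts M.cof_retract
  MorphismProperty.llp_eq_of_le_llp_of_hasFactorization_of_isStableUnderRetracts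
    fun _ _ i hi _ _ p hp => M.lift_cof_trivFib i p hi hp.1 hp.2

theorem cof_map_of_cof_succ {J : Type v} [LinearOrder J] [OrderBot J] [SuccOrder J]
    [WellFoundedLT J] (X : J ⥤ C) [HasColimit X]
    (hsucc : ∀ j : J, M.Cof (X.map (homOfLE (Order.le_succ j))))
    (hsmooth : ∀ j : J, Order.IsSuccLimit j → Nonempty (IsColimit (seqCocone X j)))
    {i j : J} (f : i ⟶ j) :
    M.Cof (X.map f) := by
  have := X.isWellOrderContinuous_of_isColimit_seqCocone hsmooth
  rw [← M.llp_trivFib_eq_cof] at hsucc ⊢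
  exact (M.Fib ⊓ M.W).llp.map_mem_of_succ_mem X hsucc f

end ModelStruct

theorem transfinite_composition_weak_equivalence_general
    [HasColimits C] (M : ModelStruct C)
    (hfiltered : ∀ (K : Type v) [SmallCategory K] [IsFiltered K]
      (X Y : K ⥤ C) (φ : X ⟶ Y),
      (∀ {k k' : K} (h : k ⟶ k'), M.Cof (X.map h) ∧ M.Cof (Y.map h)) →
      (∀ k : K, M.W (φ.app k)) →
      M.W (colim.map φ))
    (J : Type v) [LinearOrder J] [OrderBot J] [SuccOrder J] [WellFoundedLT J]
    (X Y : J ⥤ C)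
    (hXsucc : ∀ j : J, M.Cof (X.map (homOfLE (Order.le_succ j))))
    (hYsucc : ∀ j : J, M.Cof (Y.map (homOfLE (Order.le_succ j))))
    (hXsmooth : ∀ j : J, Order.IsSuccLimit j → Nonempty (IsColimit (seqCocone X j)))
    (hYsmooth : ∀ j : J, Order.IsSuccLimit j → Nonempty (IsColimit (seqCocone Y j)))
    (φ : X ⟶ Y) (hφ : ∀ j : J, M.W (φ.app j)) :
    M.W (colim.map φ) :=
  hfiltered J X Y φ
    (fun f => ⟨M.cof_map_of_cof_succ X hXsucc hXsmooth f,
      M.cof_map_of_cof_succ Y hYsucc hYsmooth f⟩) hφ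

/-- **Transfinite compositions of weak equivalences (Hovey 5.1.5).**
Let `C` be a model category in which weak equivalences are closed under filtered
colimits of cofibrations.  Let `J` be a well-ordered type (an ordinal `λ`), and
let `X, Y : J ⥤ C` be `λ`-sequences of cofibrations between cofibrant objects
(each successor map is a cofibration, and `X`, `Y` are colimit-preserving at
limit points).  If `φ : X ⟶ Y` is a levelwise weak equivalence, then the induced
map `colim X ⟶ colim Y` is a weak equivalence. -/
theorem transfinite_composition_weak_equivalence
    [HasColimits C] [HasInitial C] (M : ModelStruct C)
    (hfiltered : ∀ (K : Type v) [SmallCategory K] [IsFiltered K]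
      (X Y : K ⥤ C) (φ : X ⟶ Y),
      (∀ {k k' : K} (h : k ⟶ k'), M.Cof (X.map h) ∧ M.Cof (Y.map h)) →
      (∀ k : K, M.W (φ.app k)) →
      M.W (colim.map φ))
    (J : Type v) [LinearOrder J] [OrderBot J] [SuccOrder J] [WellFoundedLT J]
    (X Y : J ⥤ C)
    (hXsucc : ∀ j : J, M.Cof (X.map (homOfLE (Order.le_succ j))))
    (hYsucc : ∀ j : J, M.Cof (Y.map (homOfLE (Order.le_succ j))))
    (hXcofibrant : ∀ j : J, M.Cofibrant (X.obj j))
    (hYcofibrant : ∀ j : J, M.Cofibrant (Y.obj j))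
    (hXsmooth : ∀ j : J, Order.IsSuccLimit j → Nonempty (IsColimit (seqCocone X j)))
    (hYsmooth : ∀ j : J, Order.IsSuccLimit j → Nonempty (IsColimit (seqCocone Y j)))
    (φ : X ⟶ Y) (hφ : ∀ j : J, M.W (φ.app j)) :
    M.W (colim.map φ) :=
  transfinite_composition_weak_equivalence_general M hfiltered J X Y hXsucc hYsucc hXsmooth hYsmooth
    φ hφ

end TransfiniteSequences
end
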